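/- arXiv:2011.09997 — 6 statements merged into one kernel-verified Lean document; each statement's English description precedes it below -/
import Mathlib

section
/- Let λ be a partition of n = d + k and let T be a standard Young tableau of shape λ. If the first row of T does not begin with the entries 1, 2, ..., k (in order), then the charge of T is strictly greater than d. Here the charge of T is the sum of the entries of the index sequence i(w(T)) of the reading word of T. -/
/-- The reading word of a tableau (given as its list of rows): read each column from
bottom to top, columns from left to right. -/
def readingWord (rows : List (List ℕ)) : List ℕ :=
  (List.range ((rows.map List.length).foldr max 0)).flatMap
    (fun j => (rows.filterMap (fun r => r[j]?)).reverse)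

/-- The index value of the entry `j` in a word `w` (a permutation of `1, …, n`):
`1` gets index `0`; `j+1` gets the index of `j` if it lies to the right of `j`
in `w`, and one more otherwise. -/
def idxVal (w : List ℕ) : ℕ → ℕ
  | 0 => 0
  | 1 => 0
  | j + 2 =>
      idxVal w (j + 1) + (if w.idxOf (j + 1) < w.idxOf (j + 2) then 0 else 1)

/-- The charge of a word `w` containing the entries `1, …, n`: the sum of the entries
of the index sequence. -/
def charge (w : List ℕ) (n : ℕ) : ℕ :=
  ∑ j ∈ Finset.range (n + 1), idxVal w j

/-- `rows` is a standard Young tableau of shape `lam`, a partition of `n`: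
the row lengths are given by `lam`, which is non-increasing with positive parts summing
to `n`; the entries are exactly `1, …, n`; rows increase from left to right and
columns increase from top to bottom. -/
def IsSYT (rows : List (List ℕ)) (lam : List ℕ) (n : ℕ) : Prop :=
  rows.map List.length = lam ∧
  List.Chain' (fun a b => b ≤ a) lam ∧
  (∀ a ∈ lam, 0 < a) ∧
  lam.sum = n ∧
  rows.flatten.Perm (List.range' 1 n) ∧
  (∀ r ∈ rows, List.Chain' (· < ·) r) ∧
  (∀ i j a b, (rows[(i : ℕ)]?).bind (fun r => r[(j : ℕ)]?) = some a →
    (rows[i + 1]?).bind (fun r => r[j]?) = some b → a < b)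


/-!
Let `p` be the first position (counted from `0`) at which the first row deviates from
`1, 2, …`. Then `p` ends the initial segment `1, …, p` of the first row, and `p + 1` must sit
in a lower row, weakly to the left of `p` (otherwise the entry in position `p` of the first row
would lie strictly between `p` and `p + 1`). The reading word therefore reads `p + 1` before
`p`, so `p + 1` gets index at least `1`. Index values never decrease, hence each of
`p + 1, …, n` contributes at least `1` to the charge, which is thus at least
`n - p ≥ n - k + 1 = d + 1`.
-/

theorem List.Pairwise.rel_of_getElem? {α : Type*} {R : α → α → Prop} {l : List α}
    (h : l.Pairwise R) {i j : ℕ} {a b : α} (hij : i < j) (ha : l[i]? = some a)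
    (hb : l[j]? = some b) : R a b := by
  obtain ⟨hi, rfl⟩ := List.getElem?_eq_some_iff.1 ha
  obtain ⟨hj, rfl⟩ := List.getElem?_eq_some_iff.1 hb
  exact List.pairwise_iff_getElem.1 h i j hi hj hij

theorem List.exists_first_getElem?_ne_of_take_ne {l : List ℕ} {k : ℕ}
    (h : l.take k ≠ List.range' 1 k) :
    ∃ p < k, l[p]? ≠ some (p + 1) ∧ ∀ q < p, l[q]? = some (q + 1) := by
  have hex : ∃ p, p < k ∧ l[p]? ≠ some (p + 1) := by
    by_contra! hall
    refine h (List.ext_getElem? fun q => ?_)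
    by_cases hq : q < k
    · simp [hq, hall q hq, Nat.add_comm]
    · simp [hq]
  classical
  refine ⟨Nat.find hex, (Nat.find_spec hex).1, (Nat.find_spec hex).2, fun q hq => ?_⟩
  by_contra hne
  exact Nat.find_min hex hq ⟨hq.trans (Nat.find_spec hex).1, hne⟩

theorem idxVal_monotone (w : List ℕ) : Monotone (idxVal w) := by
  refine monotone_nat_of_le_succ fun j => ?_
  rcases j with _ | j
  · exact Nat.zero_le _
  · rw [idxVal]
    exact Nat.le_add_right _ _

theorem idxVal_succ_pos {w : List ℕ} {t : ℕ} (ht : 1 ≤ t) (h : w.idxOf (t + 1) < w.idxOf t) :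
    0 < idxVal w (t + 1) := by
  obtain ⟨j, rfl⟩ := Nat.exists_eq_add_of_le' ht
  rw [idxVal, if_neg (Nat.lt_asymm h)]
  omega

theorem sub_le_charge_of_idxVal_pos {w : List ℕ} {n t : ℕ} (ht : 0 < idxVal w t) :
    n + 1 - t ≤ charge w n := by
  calc n + 1 - t = (Finset.Ico t (n + 1)).card • 1 := by simp
    _ ≤ ∑ j ∈ Finset.Ico t (n + 1), idxVal w j :=
      Finset.card_nsmul_le_sum _ _ _ fun j hj =>
        ht.trans_le (idxVal_monotone w (Finset.mem_Ico.1 hj).1)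
    _ ≤ charge w n :=
      Finset.sum_le_sum_of_subset fun j hj => by
        simp only [Finset.mem_Ico, Finset.mem_range] at hj ⊢
        exact hj.2

/-- The entry in row `i`, column `j`, both counted from `0`. -/
def cell (rows : List (List ℕ)) (i j : ℕ) : Option ℕ :=
  rows[i]?.bind (·[j]?)

theorem cell_zero (rows : List (List ℕ)) (j : ℕ) : cell rows 0 j = (rows.headD [])[j]? := by
  cases rows <;> rfl

section Cells

variable {rows : List (List ℕ)}

theorem mem_filterMap_getElem?_iff {j v : ℕ} :
    v ∈ rows.filterMap (·[j]?) ↔ ∃ i, cell rows i j = some v := by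
  simp only [List.mem_filterMap, cell, Option.bind_eq_some_iff]
  constructor
  · rintro ⟨r, hr, hv⟩
    obtain ⟨i, hi⟩ := List.mem_iff_getElem?.1 hr
    exact ⟨i, r, hi, hv⟩
  · rintro ⟨i, r, hi, hv⟩
    exact ⟨r, List.mem_of_getElem? hi, hv⟩

theorem cell_injective (hnd : rows.flatten.Nodup) {i i' j j' v : ℕ}
    (h : cell rows i j = some v) (h' : cell rows i' j' = some v) : i = i' ∧ j = j' := by
  obtain ⟨hnd_rows, hdisj⟩ := List.nodup_flatten.1 hnd
  simp only [cell, Option.bind_eq_some_iff] at h h'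
  obtain ⟨r, hr, hv⟩ := h
  obtain ⟨r', hr', hv'⟩ := h'
  have hii : i = i' := by
    by_contra hne
    rcases Nat.lt_or_gt_of_ne hne with hlt | hlt
    · exact hdisj.rel_of_getElem? hlt hr hr' (List.mem_of_getElem? hv) (List.mem_of_getElem? hv')
    · exact hdisj.rel_of_getElem? hlt hr' hr (List.mem_of_getElem? hv') (List.mem_of_getElem? hv)
  subst hii
  obtain rfl : r = r' := Option.some.inj (hr.symm.trans hr')
  exact ⟨rfl, (List.getElem?_inj (List.getElem?_eq_some_iff.1 hv).1
    (hnd_rows r (List.mem_of_getElem? hr))).1 (hv.trans hv'.symm)⟩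

theorem readingWord_eq_append {c x : ℕ} (h : cell rows 0 c = some x) :
    ∃ P S, readingWord rows = P ++ x :: S ∧
      ∀ v, v ∈ P ↔ ∃ i j, cell rows i j = some v ∧ (j < c ∨ j = c ∧ 0 < i) := by
  obtain ⟨hd, rs, rfl⟩ : ∃ hd rs, rows = hd :: rs := by
    cases rows with
    | nil => simp [cell] at h
    | cons hd rs => exact ⟨hd, rs, rfl⟩
  have hx : hd[c]? = some x := h
  set M := ((hd :: rs).map List.length).foldr max 0
  have hcM : c < M := (List.getElem?_eq_some_iff.1 hx).1.trans_le (le_max_left _ _)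
  have hrange : List.range M =
      List.range c ++ c :: (List.range (M - (c + 1))).map (c + 1 + ·) := by
    conv_lhs => rw [← Nat.add_sub_cancel' hcM]
    rw [List.range_add, List.range_succ, List.append_assoc]
    rfl
  refine ⟨(List.range c).flatMap (fun j => ((hd :: rs).filterMap (·[j]?)).reverse) ++
    (rs.filterMap (·[c]?)).reverse, ((List.range (M - (c + 1))).map (c + 1 + ·)).flatMap
    (fun j => ((hd :: rs).filterMap (·[j]?)).reverse), ?_, fun v => ?_⟩
  · rw [readingWord, hrange, List.flatMap_append, List.flatMap_cons,
      List.filterMap_cons_some (f := (·[c]?)) hx, List.reverse_cons]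
    simp only [List.append_assoc, List.cons_append, List.nil_append]
  · simp only [List.mem_append, List.mem_flatMap, List.mem_range, List.mem_reverse,
      mem_filterMap_getElem?_iff]
    constructor
    · rintro (⟨j, hj, i, hv⟩ | ⟨i, hv⟩)
      · exact ⟨i, j, hv, Or.inl hj⟩
      · exact ⟨i + 1, c, hv, Or.inr ⟨rfl, i.succ_pos⟩⟩
    · rintro ⟨i, j, hv, hj | ⟨rfl, hi⟩⟩
      · exact Or.inl ⟨j, hj, i, hv⟩
      · obtain ⟨i, rfl⟩ := Nat.exists_eq_succ_of_ne_zero hi.ne'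
        exact Or.inr ⟨i, hv⟩

theorem idxOf_readingWord_lt (hnd : rows.flatten.Nodup) {i c c' x y : ℕ}
    (hx : cell rows 0 c' = some x) (hy : cell rows i c = some y) (hi : 0 < i) (hc : c ≤ c') :
    (readingWord rows).idxOf y < (readingWord rows).idxOf x := by
  obtain ⟨P, S, hw, hP⟩ := readingWord_eq_append hx
  have hyP : y ∈ P := (hP y).2 ⟨i, c, hy, by omega⟩
  have hxP : x ∉ P := fun hxP => by
    obtain ⟨i', j', hx', hij'⟩ := (hP x).1 hxP
    obtain ⟨rfl, rfl⟩ := cell_injective hnd hx hx'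
    omega
  rw [hw, List.idxOf_append_of_mem hyP, List.idxOf_append_of_notMem hxP, List.idxOf_cons_self]
  simpa using List.idxOf_lt_length_of_mem hyP

end Cells

namespace IsSYT

variable {rows : List (List ℕ)} {lam : List ℕ} {n : ℕ}

theorem nodup (hT : IsSYT rows lam n) : rows.flatten.Nodup := by
  obtain ⟨-, -, -, -, hperm, -⟩ := hT
  exact hperm.nodup_iff.2 List.nodup_range'

theorem exists_cell (hT : IsSYT rows lam n) {v : ℕ} (h1 : 1 ≤ v) (hv : v ≤ n) :
    ∃ i j, cell rows i j = some v := by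
  obtain ⟨-, -, -, -, hperm, -⟩ := hT
  have hmem : v ∈ rows.flatten := hperm.mem_iff.2 (List.mem_range'_1.2 ⟨h1, by omega⟩)
  obtain ⟨r, hr, hvr⟩ := List.mem_flatten.1 hmem
  obtain ⟨i, hi⟩ := List.mem_iff_getElem?.1 hr
  obtain ⟨j, hj⟩ := List.mem_iff_getElem?.1 hvr
  exact ⟨i, j, by simp [cell, hi, hj]⟩

theorem one_le (hT : IsSYT rows lam n) {i j v : ℕ} (h : cell rows i j = some v) : 1 ≤ v := by
  obtain ⟨-, -, -, -, hperm, -⟩ := hT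
  simp only [cell, Option.bind_eq_some_iff] at h
  obtain ⟨r, hr, hv⟩ := h
  have hmem : v ∈ rows.flatten :=
    List.mem_flatten.2 ⟨r, List.mem_of_getElem? hr, List.mem_of_getElem? hv⟩
  exact (List.mem_range'_1.1 (hperm.mem_iff.1 hmem)).1

theorem length_le_of_le (hT : IsSYT rows lam n) {i i' : ℕ} {r r' : List ℕ} (hii : i ≤ i')
    (hr : rows[i]? = some r) (hr' : rows[i']? = some r') : r'.length ≤ r.length := by
  obtain ⟨hlen, hdec, -⟩ := hT
  rcases hii.lt_or_eq with hlt | rfl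
  · have hpw : (rows.map List.length).Pairwise (fun a b => b ≤ a) := hlen ▸ hdec.pairwise
    exact (List.pairwise_map.1 hpw).rel_of_getElem? hlt hr hr'
  · rw [Option.some.inj (hr.symm.trans hr')]

theorem exists_cell_of_le (hT : IsSYT rows lam n) {i i' j j' a : ℕ}
    (h : cell rows i j = some a) (hi : i' ≤ i) (hj : j' ≤ j) : ∃ b, cell rows i' j' = some b := by
  simp only [cell, Option.bind_eq_some_iff] at h ⊢
  obtain ⟨r, hr, ha⟩ := h
  obtain ⟨r', hr'⟩ : ∃ r', rows[i']? = some r' :=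
    ⟨_, List.getElem?_eq_getElem ((List.getElem?_eq_some_iff.1 hr).1.trans_le' hi)⟩
  have hj' : j' < r'.length :=
    ((List.getElem?_eq_some_iff.1 ha).1.trans_le' hj).trans_le (hT.length_le_of_le hi hr' hr)
  exact ⟨_, r', hr', List.getElem?_eq_getElem hj'⟩

theorem cell_lt_of_col_lt (hT : IsSYT rows lam n) {i j j' a b : ℕ}
    (ha : cell rows i j = some a) (hb : cell rows i j' = some b) (hjj : j < j') : a < b := by
  obtain ⟨-, -, -, -, -, hrow, -⟩ := hT
  simp only [cell, Option.bind_eq_some_iff] at ha hb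
  obtain ⟨r, hr, ha⟩ := ha
  obtain ⟨r', hr', hb⟩ := hb
  obtain rfl : r = r' := Option.some.inj (hr.symm.trans hr')
  exact (hrow r (List.mem_of_getElem? hr)).pairwise.rel_of_getElem? hjj ha hb

theorem cell_lt_of_row_lt (hT : IsSYT rows lam n) {i i' j a b : ℕ}
    (ha : cell rows i j = some a) (hb : cell rows i' j = some b) (hii : i < i') : a < b := by
  induction i' generalizing b with
  | zero => omega
  | succ i' ih =>
    obtain ⟨c, hc⟩ := hT.exists_cell_of_le hb (Nat.le_succ i') le_rfl
    have hcb : c < b := hT.2.2.2.2.2.2 i' j c b hc hb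
    rcases (Nat.lt_succ_iff.1 hii).lt_or_eq with hlt | rfl
    · exact (ih hc hlt).trans hcb
    · rwa [Option.some.inj (ha.symm.trans hc)]

theorem cell_le_of_le (hT : IsSYT rows lam n) {i i' j j' a b : ℕ}
    (ha : cell rows i j = some a) (hb : cell rows i' j' = some b) (hi : i' ≤ i) (hj : j' ≤ j) :
    b ≤ a := by
  obtain ⟨c, hc⟩ := hT.exists_cell_of_le ha hi le_rfl
  have hbc : b ≤ c := by
    rcases hj.lt_or_eq with hlt | rfl
    · exact (hT.cell_lt_of_col_lt hb hc hlt).le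
    · exact (Option.some.inj (hb.symm.trans hc)).le
  have hca : c ≤ a := by
    rcases hi.lt_or_eq with hlt | rfl
    · exact (hT.cell_lt_of_row_lt hc ha hlt).le
    · exact (Option.some.inj (hc.symm.trans ha)).le
  exact hbc.trans hca

theorem cell_zero_zero (hT : IsSYT rows lam n) (hn : 1 ≤ n) : cell rows 0 0 = some 1 := by
  obtain ⟨i, j, h⟩ := hT.exists_cell le_rfl hn
  obtain ⟨b, hb⟩ := hT.exists_cell_of_le h (Nat.zero_le i) (Nat.zero_le j)
  have hb1 : b ≤ 1 := hT.cell_le_of_le h hb (Nat.zero_le i) (Nat.zero_le j)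
  rwa [le_antisymm hb1 (hT.one_le hb)] at hb

/-- The witness `t` is the last entry of the longest initial segment `1, …, t` of the first row. -/
theorem exists_succ_southwest_of_take_ne (hT : IsSYT rows lam n) {k : ℕ} (hk : k ≤ n)
    (hrow : (rows.headD []).take k ≠ List.range' 1 k) :
    ∃ t < k, ∃ i c c', cell rows 0 c' = some t ∧ 0 < i ∧ cell rows i c = some (t + 1) ∧
      c ≤ c' := by
  obtain ⟨p, hpk, hp, hmin⟩ := List.exists_first_getElem?_ne_of_take_ne hrow
  simp only [← cell_zero] at hp hmin
  have hp1 : 1 ≤ p := by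
    rcases p with _ | p
    · exact absurd (hT.cell_zero_zero (by omega)) hp
    · omega
  have hprev : cell rows 0 (p - 1) = some p := by
    simpa [Nat.sub_add_cancel hp1] using hmin (p - 1) (by omega)
  obtain ⟨i, c, hc⟩ := hT.exists_cell (v := p + 1) (by omega) (by omega)
  have hcp : c < p := by
    by_contra! hpc
    obtain ⟨b, hb⟩ := hT.exists_cell_of_le hc (Nat.zero_le i) hpc
    have hb_le : b ≤ p + 1 := hT.cell_le_of_le hc hb (Nat.zero_le i) hpc
    have hb_gt : p < b := hT.cell_lt_of_col_lt hprev hb (by omega)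
    exact hp (by rw [hb, show b = p + 1 by omega])
  have hi : 0 < i := by
    rcases i with _ | i
    · have := hmin c hcp
      rw [hc, Option.some.injEq] at this
      omega
    · exact i.succ_pos
  exact ⟨p, hpk, i, c, p - 1, hprev, hi, hc, by omega⟩

end IsSYT

theorem charge_gt_of_first_row_not_initial (n d k : ℕ) (hn : n = d + k)
    (lam : List ℕ) (rows : List (List ℕ)) (hT : IsSYT rows lam n)
    (hrow : (rows.headD []).take k ≠ List.range' 1 k) :
    d < charge (readingWord rows) n := by
  obtain ⟨t, htk, i, c, c', ht, hi, hsucc, hcc⟩ :=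
    hT.exists_succ_southwest_of_take_ne (by omega) hrow
  have hread := idxOf_readingWord_lt hT.nodup ht hsucc hi hcc
  have hcharge := sub_le_charge_of_idxVal_pos (n := n) (idxVal_succ_pos (hT.one_le ht) hread)
  omega
end

section
/- The polynomial (X₁ − X₂)² is invariant under the transposition swapping X₁ and X₂, and is a sum of squares of polynomials, but it cannot be written as a sum of squares of symmetric polynomials in ℝ[X₁, X₂]. -/
/-!
Restrict to the line `X₁ = -X₀`: a symmetric `g` becomes an even polynomial `q(t) = g(t, -t)`,
so its coefficient of `t` vanishes, while `(X₀ - X₁)²` becomes `4t²`. If `4t² = ∑ qᵢ²`, comparing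
constant terms forces every `qᵢ(0) = 0`; with evenness, `t² ∣ qᵢ`, hence `t⁴ ∣ 4t²`, which is absurd.
-/

open MvPolynomial

namespace Polynomial

variable {R : Type*} [CommRing R]

theorem coeff_comp_neg_X (p : R[X]) (n : ℕ) :
    (p.comp (-X)).coeff n = (-1) ^ n * p.coeff n := by
  induction p using Polynomial.induction_on' with
  | add p q hp hq => rw [add_comp, coeff_add, coeff_add, hp, hq, mul_add]
  | monomial k a =>
    rw [← C_mul_X_pow_eq_monomial, mul_comp, C_comp, X_pow_comp, neg_pow, ← C_1, ← C_neg,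
      ← C_pow, ← mul_assoc, ← C_mul, coeff_C_mul_X_pow, coeff_C_mul_X_pow]
    split_ifs with h
    · rw [h, mul_comm]
    · rw [mul_zero]

theorem coeff_eq_zero_of_comp_neg_X_eq [IsAddTorsionFree R] {p : R[X]} (hp : p.comp (-X) = p)
    {n : ℕ} (hn : Odd n) : p.coeff n = 0 := by
  have := coeff_comp_neg_X p n
  rwa [hp, hn.neg_one_pow, neg_one_mul, eq_comm, neg_eq_self] at this

theorem X_dvd_of_X_dvd_sum_sq [LinearOrder R] [IsStrictOrderedRing R] {ι : Type*}
    {s : Finset ι} {q : ι → R[X]} (h : X ∣ ∑ i ∈ s, q i ^ 2) : ∀ i ∈ s, X ∣ q i := by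
  simp_rw [X_dvd_iff, coeff_zero_eq_eval_zero, eval_finsetSum, eval_pow] at h ⊢
  intro i hi
  exact pow_eq_zero_iff two_ne_zero |>.1 <|
    (Finset.sum_eq_zero_iff_of_nonneg fun j _ => sq_nonneg _).1 h i hi

end Polynomial

namespace MvPolynomial

variable {R : Type*} [CommRing R]

noncomputable def restrictAntidiagonal : MvPolynomial (Fin 2) R →ₐ[R] Polynomial R :=
  aeval ![Polynomial.X, -Polynomial.X]

theorem restrictAntidiagonal_comp_neg_X {g : MvPolynomial (Fin 2) R}
    (hg : rename (Equiv.swap 0 1) g = g) :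
    (restrictAntidiagonal g).comp (-Polynomial.X) = restrictAntidiagonal g := by
  have hswap : (fun i => Polynomial.aeval (-Polynomial.X : Polynomial R)
      (![Polynomial.X, -Polynomial.X] i : Polynomial R)) =
      ![Polynomial.X, -Polynomial.X] ∘ Equiv.swap 0 1 := by
    funext i; fin_cases i <;> simp
  conv_rhs => rw [← hg, restrictAntidiagonal, aeval_rename, ← hswap]
  rw [Polynomial.comp_eq_aeval, restrictAntidiagonal, comp_aeval_apply]

theorem restrictAntidiagonal_sub_sq :
    restrictAntidiagonal ((X 0 - X 1) ^ 2 : MvPolynomial (Fin 2) R) =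
      Polynomial.C 4 * Polynomial.X ^ 2 := by
  simp only [restrictAntidiagonal, map_pow, map_sub, aeval_X, Matrix.cons_val_zero,
    Matrix.cons_val_one, Matrix.cons_val_fin_one, sub_neg_eq_add, map_ofNat]
  ring

end MvPolynomial

theorem square_of_difference_sos_but_not_symmetric_sos :
    (rename (Equiv.swap (0 : Fin 2) 1) ((X 0 - X 1) ^ 2 : MvPolynomial (Fin 2) ℝ)
        = ((X 0 - X 1) ^ 2 : MvPolynomial (Fin 2) ℝ)) ∧
    (∃ (m : ℕ) (g : Fin m → MvPolynomial (Fin 2) ℝ),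
        ((X 0 - X 1) ^ 2 : MvPolynomial (Fin 2) ℝ) = ∑ i, (g i) ^ 2) ∧
    ¬ (∃ (m : ℕ) (g : Fin m → MvPolynomial (Fin 2) ℝ),
        (∀ i, rename (Equiv.swap (0 : Fin 2) 1) (g i) = g i) ∧
        ((X 0 - X 1) ^ 2 : MvPolynomial (Fin 2) ℝ) = ∑ i, (g i) ^ 2) := by
  refine ⟨by simp only [map_pow, map_sub, rename_X, Equiv.swap_apply_left,
    Equiv.swap_apply_right]; ring, ⟨1, ![X 0 - X 1], by simp⟩, ?_⟩
  rintro ⟨m, g, hsym, hsum⟩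
  set q : Fin m → Polynomial ℝ := fun i => restrictAntidiagonal (g i)
  have hq : ∑ i, q i ^ 2 = Polynomial.C 4 * Polynomial.X ^ 2 := by
    simpa [q] using (congrArg restrictAntidiagonal hsum).symm.trans restrictAntidiagonal_sub_sq
  have hX : ∀ i, Polynomial.X ∣ q i := fun i =>
    Polynomial.X_dvd_of_X_dvd_sum_sq (hq ▸ (dvd_pow_self _ two_ne_zero).mul_left _) i
      (Finset.mem_univ i)
  have hX2 : ∀ i, Polynomial.X ^ 2 ∣ q i := fun i => Polynomial.X_pow_dvd_iff.2 fun
    | 0, _ => Polynomial.X_dvd_iff.1 (hX i)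
    | 1, _ => Polynomial.coeff_eq_zero_of_comp_neg_X_eq
        (restrictAntidiagonal_comp_neg_X (hsym i)) odd_one
  have hX4 : Polynomial.X ^ 4 ∣ Polynomial.C (4 : ℝ) * Polynomial.X ^ 2 :=
    hq ▸ Finset.dvd_sum fun i _ => by simpa [← pow_mul] using pow_dvd_pow_of_dvd (hX2 i) 2
  simpa using Polynomial.X_pow_dvd_iff.1 hX4 2 (by norm_num)
end

section
/- Let f = a·(X₁²+X₂²+X₃²+X₄²)² + b·(X₁⁴+X₂⁴+X₃⁴+X₄⁴) + c·X₁X₂X₃X₄ with a, b, c ∈ ℝ. Then f is nonnegative on ℝ⁴ if and only if f(1,0,0,0) ≥ 0, f(1,1,1,1) ≥ 0, and f(1,1,1,−1) ≥ 0. -/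
/-!
The admissible coefficients `(a, b, c)` form a convex cone, and the three point values
`f(1,0,0,0) = a + b`, `f(1,1,1,1) = 16a + 4b + c`, `f(1,1,1,-1) = 16a + 4b - c` are
coordinates on the coefficient space. Writing `f` in these coordinates expresses it as a
combination of the three forms `4Σxᵢ⁴ - (Σxᵢ²)²` and `(Σxᵢ²)² - Σxᵢ⁴ ± 12x₁x₂x₃x₄`, with the
point values as coefficients. These three forms are nonnegative (Cauchy–Schwarz, resp. AM–GM
on the three pairings `xᵢxⱼ`, `xₖxₗ` of the indices), so nonnegative point values force `f ≥ 0`.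
-/

/-- The `D₄`-invariant quartic `a·(Σxᵢ²)² + b·Σxᵢ⁴ + c·x₁x₂x₃x₄` as a function on `ℝ⁴`. -/
def D4Quartic (a b c : ℝ) (x : Fin 4 → ℝ) : ℝ :=
  a * (∑ i, x i ^ 2) ^ 2 + b * (∑ i, x i ^ 4) + c * (∏ i, x i)

theorem sq_sum_sq_le_card_mul_sum_pow_four {ι : Type*} [Fintype ι] (x : ι → ℝ) :
    (∑ i, x i ^ 2) ^ 2 ≤ Fintype.card ι * ∑ i, x i ^ 4 := by
  have h := sq_sum_le_card_mul_sum_sq (s := Finset.univ) (f := fun i ↦ x i ^ 2)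
  simp_rw [← pow_mul] at h
  exact h

theorem twelve_mul_abs_prod_le (x : Fin 4 → ℝ) :
    12 * |∏ i, x i| ≤ (∑ i, x i ^ 2) ^ 2 - ∑ i, x i ^ 4 := by
  simp only [Fin.sum_univ_four, Fin.prod_univ_four]
  cases abs_cases (x 0 * x 1 * x 2 * x 3) <;>
    nlinarith [sq_nonneg (x 0 * x 1 + x 2 * x 3), sq_nonneg (x 0 * x 2 + x 1 * x 3),
      sq_nonneg (x 0 * x 3 + x 1 * x 2), sq_nonneg (x 0 * x 1 - x 2 * x 3),
      sq_nonneg (x 0 * x 2 - x 1 * x 3), sq_nonneg (x 0 * x 3 - x 1 * x 2)]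

theorem D4Quartic_neg_one_four_zero_nonneg (x : Fin 4 → ℝ) : 0 ≤ D4Quartic (-1) 4 0 x := by
  have := sq_sum_sq_le_card_mul_sum_pow_four x
  simp only [Fintype.card_fin, Nat.cast_ofNat] at this
  simp only [D4Quartic]
  linarith

theorem D4Quartic_one_neg_one_nonneg {c : ℝ} (hc : |c| ≤ 12) (x : Fin 4 → ℝ) :
    0 ≤ D4Quartic 1 (-1) c x := by
  have hcx : -(12 * |∏ i, x i|) ≤ c * ∏ i, x i := by
    calc -(12 * |∏ i, x i|) ≤ -|c * ∏ i, x i| := by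
          rw [abs_mul]; gcongr
      _ ≤ c * ∏ i, x i := neg_abs_le _
  have := twelve_mul_abs_prod_le x
  simp only [D4Quartic]
  linarith

theorem D4Quartic_eq_sum_point_values (a b c : ℝ) (x : Fin 4 → ℝ) :
    24 * D4Quartic a b c x =
      8 * D4Quartic a b c ![1, 0, 0, 0] * D4Quartic (-1) 4 0 x +
        D4Quartic a b c ![1, 1, 1, 1] * D4Quartic 1 (-1) 12 x +
        D4Quartic a b c ![1, 1, 1, -1] * D4Quartic 1 (-1) (-12) x := by
  simp only [D4Quartic, Fin.sum_univ_four, Fin.prod_univ_four, Matrix.cons_val_zero,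
    Matrix.cons_val_one, Matrix.cons_val]
  ring

theorem D4_quartic_nonneg_iff_three_points (a b c : ℝ) :
    (∀ x : Fin 4 → ℝ, 0 ≤ D4Quartic a b c x) ↔
      (0 ≤ D4Quartic a b c ![1, 0, 0, 0] ∧
       0 ≤ D4Quartic a b c ![1, 1, 1, 1] ∧
       0 ≤ D4Quartic a b c ![1, 1, 1, -1]) := by
  refine ⟨fun h ↦ ⟨h _, h _, h _⟩, fun ⟨h₁, h₂, h₃⟩ x ↦ ?_⟩
  have hq := mul_nonneg h₁ (D4Quartic_neg_one_four_zero_nonneg x)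
  have hp := mul_nonneg h₂ (D4Quartic_one_neg_one_nonneg (c := 12) (by norm_num) x)
  have hm := mul_nonneg h₃ (D4Quartic_one_neg_one_nonneg (c := -12) (by norm_num) x)
  linarith [D4Quartic_eq_sum_point_values a b c x]
end

section
/- Every D₄-invariant quartic form f = a·p₂² + b·p₄ + c·e₄ that is nonnegative on ℝ⁴ can be written as a nonnegative linear combination of the three forms 4·p₄ − p₂², p₂² − p₄ + 12·e₄, and p₂² − p₄ − 12·e₄; that is, the cone of nonnegative D₄-invariant quartics is the simplicial cone generated by these three forms. -/
open MvPolynomial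

noncomputable def p2sq : MvPolynomial (Fin 4) ℝ := (∑ i, X i ^ 2) ^ 2
noncomputable def p4 : MvPolynomial (Fin 4) ℝ := ∑ i, X i ^ 4
noncomputable def e4 : MvPolynomial (Fin 4) ℝ := ∏ i, X i

/-!
The three points `(1,0,0,0)`, `(1,1,1,1)` and `(1,1,1,-1)` are each a common zero of two of the
three generators, at which the third one takes the value `3`, `24` and `24` respectively. Hence the
coordinates of `f` in the basis of generators are `f(1,0,0,0)/3`, `f(1,1,1,1)/24` and
`f(1,1,1,-1)/24`, which are nonnegative when `f` is.
-/

noncomputable def d4Quartic (a b c : ℝ) : MvPolynomial (Fin 4) ℝ :=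
  C a * p2sq + C b * p4 + C c * e4

lemma eval_d4Quartic (a b c : ℝ) (x : Fin 4 → ℝ) :
    eval x (d4Quartic a b c) =
      a * (∑ i, x i ^ 2) ^ 2 + b * ∑ i, x i ^ 4 + c * ∏ i, x i := by
  simp [d4Quartic, p2sq, p4, e4]

lemma eval_d4Quartic_basisVector (a b c : ℝ) :
    eval ![1, 0, 0, 0] (d4Quartic a b c) = a + b := by
  simp [eval_d4Quartic, Fin.sum_univ_four, Fin.prod_univ_four]

lemma eval_d4Quartic_ones (a b c : ℝ) :
    eval ![1, 1, 1, 1] (d4Quartic a b c) = 16 * a + 4 * b + c := by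
  simp only [eval_d4Quartic, Fin.sum_univ_four, Fin.prod_univ_four, Matrix.cons_val_zero,
    Matrix.cons_val_one, Matrix.cons_val]
  ring

lemma eval_d4Quartic_ones_neg (a b c : ℝ) :
    eval ![1, 1, 1, -1] (d4Quartic a b c) = 16 * a + 4 * b - c := by
  simp only [eval_d4Quartic, Fin.sum_univ_four, Fin.prod_univ_four, Matrix.cons_val_zero,
    Matrix.cons_val_one, Matrix.cons_val]
  ring

lemma simplicial_combination_eq_d4Quartic (t₁ t₂ t₃ : ℝ) :
    C t₁ * (4 * p4 - p2sq) + C t₂ * (p2sq - p4 + 12 * e4) + C t₃ * (p2sq - p4 - 12 * e4) =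
      d4Quartic (t₂ + t₃ - t₁) (4 * t₁ - t₂ - t₃) (12 * (t₂ - t₃)) := by
  simp only [d4Quartic, map_add, map_sub, map_mul, map_ofNat]
  ring

theorem nonneg_D4_quartic_in_simplicial_cone (a b c : ℝ)
    (hf : ∀ x : Fin 4 → ℝ, 0 ≤ eval x (C a * p2sq + C b * p4 + C c * e4)) :
    ∃ t₁ t₂ t₃ : ℝ, 0 ≤ t₁ ∧ 0 ≤ t₂ ∧ 0 ≤ t₃ ∧
      C a * p2sq + C b * p4 + C c * e4 =
        C t₁ * (4 * p4 - p2sq) + C t₂ * (p2sq - p4 + 12 * e4)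
          + C t₃ * (p2sq - p4 - 12 * e4) := by
  have h₁ : 0 ≤ a + b := eval_d4Quartic_basisVector a b c ▸ hf _
  have h₂ : 0 ≤ 16 * a + 4 * b + c := eval_d4Quartic_ones a b c ▸ hf _
  have h₃ : 0 ≤ 16 * a + 4 * b - c := eval_d4Quartic_ones_neg a b c ▸ hf _
  refine ⟨(a + b) / 3, (16 * a + 4 * b + c) / 24, (16 * a + 4 * b - c) / 24,
    by positivity, by positivity, by positivity, ?_⟩
  rw [simplicial_combination_eq_d4Quartic]
  change d4Quartic a b c = _
  congr 1 <;> ring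
end

section
/- The even symmetric ternary octic form 3·e₁(X²)·e₃(X²) − 4·e₂(X²)² + e₁(X²)²·e₂(X²) is nonnegative on ℝ³, where X² = (X₁², X₂², X₃²) and eᵢ are elementary symmetric polynomials in three variables. -/
/-! In the squared variables `a = x², b = y², c = z²` the form equals
`ab(a - b)² + bc(b - c)² + ca(c - a)²`, whose terms are nonnegative once `a, b, c ≥ 0`;
in `x, y, z` this is the sum of squares `Σ (xy(x² - y²))²`. -/

/-- `3 e₁ e₃ - 4 e₂² + e₁² e₂` in the elementary symmetric polynomials of `a, b, c`. -/
def symmetricQuarticForm {R : Type*} [CommRing R] (a b c : R) : R :=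
  3 * (a + b + c) * (a * b * c) - 4 * (a * b + a * c + b * c) ^ 2
    + (a + b + c) ^ 2 * (a * b + a * c + b * c)

theorem symmetricQuarticForm_eq {R : Type*} [CommRing R] (a b c : R) :
    symmetricQuarticForm a b c = a * b * (a - b) ^ 2 + b * c * (b - c) ^ 2 + c * a * (c - a) ^ 2 := by
  unfold symmetricQuarticForm
  ring

theorem symmetricQuarticForm_nonneg {R : Type*} [CommRing R] [LinearOrder R] [IsStrictOrderedRing R]
    {a b c : R} (ha : 0 ≤ a) (hb : 0 ≤ b) (hc : 0 ≤ c) : 0 ≤ symmetricQuarticForm a b c := by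
  rw [symmetricQuarticForm_eq]
  positivity

theorem even_symmetric_octic_3e1e3_minus_4e2sq_plus_e1sq_e2_nonneg :
    ∀ x y z : ℝ,
      0 ≤ 3 * (x ^ 2 + y ^ 2 + z ^ 2) * (x ^ 2 * y ^ 2 * z ^ 2)
            - 4 * (x ^ 2 * y ^ 2 + x ^ 2 * z ^ 2 + y ^ 2 * z ^ 2) ^ 2
            + (x ^ 2 + y ^ 2 + z ^ 2) ^ 2
              * (x ^ 2 * y ^ 2 + x ^ 2 * z ^ 2 + y ^ 2 * z ^ 2) :=
  fun x y z => symmetricQuarticForm_nonneg (sq_nonneg x) (sq_nonneg y) (sq_nonneg z)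
end

section
/- Let L be a linear subspace of the space of real quadratic forms on a finite-dimensional real vector space V, and let K = L ∩ {positive semidefinite forms}. A form Q ∈ K spans an extreme ray of K if and only if the kernel of Q is maximal in the following sense: whenever P ∈ L satisfies ker Q ⊆ ker P, then P = λQ for some λ ∈ ℝ. -/
variable {V : Type*} [AddCommGroup V] [Module ℝ V]

/-- The kernel (radical) of a quadratic form: vectors pairing to zero with everything
under the associated bilinear (polar) form. -/
def qfKernel (Q : QuadraticForm ℝ V) : Set V :=
  {v | ∀ w, QuadraticMap.polar Q v w = 0}

/-- `Q` is positive semidefinite. -/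
def IsPsd (Q : QuadraticForm ℝ V) : Prop := ∀ v, 0 ≤ Q v

/-- `Q` spans an extreme ray of `K = L ∩ PSD`. -/
def SpansExtremeRayOfSection (L : Submodule ℝ (QuadraticForm ℝ V))
    (Q : QuadraticForm ℝ V) : Prop :=
  ∀ Q₁ Q₂ : QuadraticForm ℝ V, Q₁ ∈ L → IsPsd Q₁ → Q₂ ∈ L → IsPsd Q₂ →
    Q = Q₁ + Q₂ →
      (∃ c : ℝ, 0 ≤ c ∧ Q₁ = c • Q) ∧ (∃ c : ℝ, 0 ≤ c ∧ Q₂ = c • Q)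

open QuadraticMap Finset

lemma qf_add_expand (Q : QuadraticForm ℝ V) (x y : V) :
    Q (x + y) = Q x + Q y + polar Q x y := by
  have h : polar (⇑Q) x y = Q (x + y) - Q x - Q y := rfl
  linarith

lemma mem_qfKernel_of_apply_eq_zero (Q : QuadraticForm ℝ V) (hQ : IsPsd Q) {v : V}
    (hv : Q v = 0) : v ∈ qfKernel Q := by
  intro w
  by_contra hp
  have key : ∀ t : ℝ, 0 ≤ t * polar Q v w + Q w := by
    intro t
    have h0 := hQ (t • v + w)
    rw [qf_add_expand, polar_smul_left, QuadraticMap.map_smul, hv, smul_eq_mul] at h0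
    simp at h0
    linarith
  have h1 := key ((-(Q w + 1)) / polar Q v w)
  rw [div_mul_cancel₀ _ hp] at h1
  linarith

lemma apply_eq_zero_of_mem_qfKernel (Q : QuadraticForm ℝ V) {v : V}
    (hv : v ∈ qfKernel Q) : Q v = 0 := by
  have h := hv v
  rw [polar_self, two_smul] at h
  linarith

lemma exists_qf_bound [FiniteDimensional ℝ V] (Q P : QuadraticForm ℝ V) (hQ : IsPsd Q)
    (hker : qfKernel Q ⊆ qfKernel P) :
    ∃ M : ℝ, 0 < M ∧ ∀ v, |P v| ≤ M * Q v := by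
  haveI : Invertible (2 : ℝ) := invertibleOfNonzero two_ne_zero
  have hsymm : (Q.polarBilin).IsSymm := ⟨fun x y => by
    simp [polar_comm]⟩
  obtain ⟨b, hb⟩ := LinearMap.BilinForm.exists_orthogonal_basis hsymm
  -- vectors with Q (b i) = 0 are in the kernel
  have hbker : ∀ i, Q (b i) = 0 → b i ∈ qfKernel Q := by
    intro i hi w
    have hw : w = ∑ j, b.repr w j • b j := (b.sum_repr w).symm
    have : polar Q (b i) w = Q.polarBilin (b i) w := rfl
    rw [this, hw, map_sum]
    refine Finset.sum_eq_zero fun j _ => ?_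
    rw [LinearMap.map_smul, smul_eq_mul]
    rcases eq_or_ne i j with rfl | hij
    · have : Q.polarBilin (b i) (b i) = polar Q (b i) (b i) := rfl
      rw [this, polar_self, hi]; simp
    · rw [hb hij, mul_zero]
  set c : _ → _ → ℝ := fun i j => P.polarBilin (b i) (b j) with hc
  set d : _ → ℝ := fun i => Q (b i) with hd
  have hcsymm : ∀ i j, c i j = c j i := fun i j => polar_comm _ _ _
  have hczero : ∀ i j, d i = 0 → c i j = 0 := by
    intro i j hi
    exact hker (hbker i hi) (b j)
  set E : _ → _ → ℝ := fun i j =>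
    if d i = 0 ∨ d j = 0 then 0 else |c i j| * (1 / (2 * d i) + 1 / (2 * d j)) with hE
  refine ⟨(∑ i, ∑ j, E i j) + 1, ?_, ?_⟩
  · have : 0 ≤ ∑ i, ∑ j, E i j := by
      refine Finset.sum_nonneg fun i _ => Finset.sum_nonneg fun j _ => ?_
      rw [hE]
      dsimp only
      split_ifs with h
      · exact le_refl 0
      · push_neg at h
        have hdi : 0 < d i := lt_of_le_of_ne (hQ (b i)) (Ne.symm h.1)
        have hdj : 0 < d j := lt_of_le_of_ne (hQ (b j)) (Ne.symm h.2)
        positivity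
    linarith
  intro v
  set x : _ → ℝ := fun i => b.repr v i with hx
  have hv : v = ∑ i, x i • b i := (b.sum_repr v).symm
  -- expansion of Q
  have expandB : ∀ (B : LinearMap.BilinForm ℝ V),
      B v v = ∑ i, ∑ j, x i * x j * B (b i) (b j) := by
    intro B
    have h2 : B v = ∑ i, x i • B (b i) := by
      conv_lhs => rw [hv]
      rw [map_sum]
      exact Finset.sum_congr rfl fun i _ => B.map_smul _ _
    have h3 : ∀ u : V, B u v = ∑ j, x j * B u (b j) := by
      intro u
      conv_lhs => rw [hv]
      rw [map_sum]
      exact Finset.sum_congr rfl fun j _ => by rw [LinearMap.map_smul, smul_eq_mul]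
    have h4 : B v v = ∑ i, x i * (B (b i) v) := by
      conv_lhs => rw [h2]
      rw [LinearMap.sum_apply]
      exact Finset.sum_congr rfl fun i _ => by rw [LinearMap.smul_apply, smul_eq_mul]
    rw [h4]
    refine Finset.sum_congr rfl fun i _ => ?_
    rw [h3 (b i), Finset.mul_sum]
    exact Finset.sum_congr rfl fun j _ => by ring
  have expand : ∀ (R : QuadraticForm ℝ V),
      2 * R v = ∑ i, ∑ j, x i * x j * R.polarBilin (b i) (b j) := by
    intro R
    have h1 : R.polarBilin v v = 2 * R v := by
      have h : R.polarBilin v v = polar R v v := rfl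
      rw [h, polar_self, two_smul]; ring
    rw [← h1, expandB]
  have hQv : 2 * Q v = ∑ i, x i * x i * (2 * d i) := by
    rw [expand Q]
    refine Finset.sum_congr rfl fun i _ => ?_
    rw [Finset.sum_eq_single i]
    · have : Q.polarBilin (b i) (b i) = polar Q (b i) (b i) := rfl
      rw [this, polar_self, two_smul, hd]; ring
    · intro j _ hji
      rw [hb (Ne.symm hji), mul_zero]
    · intro h; exact absurd (Finset.mem_univ i) h
  have hQv' : Q v = ∑ i, x i * x i * d i := by
    have : ∑ i, x i * x i * (2 * d i) = 2 * ∑ i, x i * x i * d i := by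
      rw [Finset.mul_sum]; refine Finset.sum_congr rfl fun i _ => ?_; ring
    rw [this] at hQv
    linarith
  have hterm_nonneg : ∀ i, 0 ≤ x i * x i * d i := fun i =>
    mul_nonneg (mul_self_nonneg _) (hQ (b i))
  have hxi : ∀ i, d i ≠ 0 → x i * x i ≤ Q v / d i := by
    intro i hi
    have hdi : 0 < d i := lt_of_le_of_ne (hQ (b i)) (Ne.symm hi)
    rw [le_div_iff₀ hdi, hQv']
    exact Finset.single_le_sum (fun j _ => hterm_nonneg j) (Finset.mem_univ i)
  have hPv : 2 * P v = ∑ i, ∑ j, x i * x j * c i j := expand P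
  have key : ∀ i j, |x i * x j * c i j| ≤ E i j * (2 * Q v) := by
    intro i j
    rw [hE]; dsimp only
    split_ifs with h
    · rcases h with h | h
      · rw [hczero i j h]; simp
      · rw [hcsymm, hczero j i h]; simp
    · push_neg at h
      have hdi : 0 < d i := lt_of_le_of_ne (hQ (b i)) (Ne.symm h.1)
      have hdj : 0 < d j := lt_of_le_of_ne (hQ (b j)) (Ne.symm h.2)
      have hxii := hxi i h.1
      have hxjj := hxi j h.2
      have habs : |x i * x j| ≤ (x i * x i + x j * x j) / 2 := by
        rw [abs_mul]
        nlinarith [abs_nonneg (x i), abs_nonneg (x j), sq_abs (x i), sq_abs (x j),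
          sq_nonneg (|x i| - |x j|)]
      have : |x i * x j * c i j| = |x i * x j| * |c i j| := by
        rw [abs_mul]
      rw [this]
      have hQvpos : 0 ≤ Q v := hQ v
      calc |x i * x j| * |c i j| ≤ ((Q v / d i + Q v / d j) / 2) * |c i j| := by
            apply mul_le_mul_of_nonneg_right _ (abs_nonneg _)
            calc |x i * x j| ≤ (x i * x i + x j * x j) / 2 := habs
              _ ≤ (Q v / d i + Q v / d j) / 2 := by linarith
        _ = |c i j| * (1 / (2 * d i) + 1 / (2 * d j)) * Q v := by
            field_simp
        _ ≤ |c i j| * (1 / (2 * d i) + 1 / (2 * d j)) * (2 * Q v) := by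
            have hE0 : 0 ≤ |c i j| * (1 / (2 * d i) + 1 / (2 * d j)) := by positivity
            exact mul_le_mul_of_nonneg_left (by linarith) hE0
  calc |P v| = (1/2) * |2 * P v| := by rw [abs_mul]; norm_num; ring
    _ = (1/2) * |∑ i, ∑ j, x i * x j * c i j| := by rw [hPv]
    _ ≤ (1/2) * ∑ i, ∑ j, |x i * x j * c i j| := by
        apply mul_le_mul_of_nonneg_left _ (by norm_num)
        calc |∑ i, ∑ j, x i * x j * c i j| ≤ ∑ i, |∑ j, x i * x j * c i j| :=
              Finset.abs_sum_le_sum_abs _ _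
          _ ≤ ∑ i, ∑ j, |x i * x j * c i j| :=
              Finset.sum_le_sum fun i _ => Finset.abs_sum_le_sum_abs _ _
    _ ≤ (1/2) * ∑ i, ∑ j, E i j * (2 * Q v) := by
        apply mul_le_mul_of_nonneg_left _ (by norm_num)
        exact Finset.sum_le_sum fun i _ => Finset.sum_le_sum fun j _ => key i j
    _ = (∑ i, ∑ j, E i j) * Q v := by
        have h2 : (∑ i, ∑ j, E i j * (2 * Q v)) = (∑ i, ∑ j, E i j) * (2 * Q v) := by
          simp only [Finset.sum_mul]
        rw [h2]; ring
    _ ≤ ((∑ i, ∑ j, E i j) + 1) * Q v := by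
        apply mul_le_mul_of_nonneg_right _ (hQ v)
        linarith

lemma nonneg_coeff (Q R : QuadraticForm ℝ V) (hQ : IsPsd Q) (hR : IsPsd R) (l : ℝ)
    (h : R = l • Q) : ∃ c : ℝ, 0 ≤ c ∧ R = c • Q := by
  rcases le_or_gt 0 l with h0 | h0
  · exact ⟨l, h0, h⟩
  · refine ⟨0, le_refl 0, QuadraticMap.ext fun v => ?_⟩
    have hv := DFunLike.congr_fun h v
    rw [QuadraticMap.smul_apply, smul_eq_mul] at hv
    rw [QuadraticMap.smul_apply, smul_eq_mul, zero_mul]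
    nlinarith [hR v, hQ v]

theorem extreme_ray_iff_maximal_kernel [FiniteDimensional ℝ V]
    (L : Submodule ℝ (QuadraticForm ℝ V)) (Q : QuadraticForm ℝ V)
    (hQL : Q ∈ L) (hQpsd : IsPsd Q) :
    SpansExtremeRayOfSection L Q ↔
      (∀ P : QuadraticForm ℝ V, P ∈ L → qfKernel Q ⊆ qfKernel P →
        ∃ lam : ℝ, P = lam • Q) := by
  constructor
  · intro hext P hPL hker
    obtain ⟨M, hM, hbd⟩ := exists_qf_bound Q P hQpsd hker
    have hMne : (2 * M) ≠ 0 := by positivity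
    have hinv : 0 < (2 * M)⁻¹ := by positivity
    set Q₁ : QuadraticForm ℝ V := (2⁻¹ : ℝ) • Q + (2 * M)⁻¹ • P with hQ₁
    set Q₂ : QuadraticForm ℝ V := (2⁻¹ : ℝ) • Q - (2 * M)⁻¹ • P with hQ₂
    have h1L : Q₁ ∈ L := L.add_mem (L.smul_mem _ hQL) (L.smul_mem _ hPL)
    have h2L : Q₂ ∈ L := L.sub_mem (L.smul_mem _ hQL) (L.smul_mem _ hPL)
    have happ : ∀ v, Q₁ v = 2⁻¹ * Q v + (2 * M)⁻¹ * P v := fun v => by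
      rw [hQ₁, QuadraticMap.add_apply, QuadraticMap.smul_apply, QuadraticMap.smul_apply,
        smul_eq_mul, smul_eq_mul]
    have happ2 : ∀ v, Q₂ v = 2⁻¹ * Q v - (2 * M)⁻¹ * P v := fun v => by
      rw [hQ₂, QuadraticMap.sub_apply, QuadraticMap.smul_apply, QuadraticMap.smul_apply,
        smul_eq_mul, smul_eq_mul]
    have h1p : IsPsd Q₁ := by
      intro v
      rw [happ]
      have h2 := (abs_le.mp (hbd v)).1
      calc (0:ℝ) ≤ (2 * M)⁻¹ * (P v + M * Q v) := mul_nonneg hinv.le (by linarith)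
        _ = 2⁻¹ * Q v + (2 * M)⁻¹ * P v := by field_simp; ring
    have h2p : IsPsd Q₂ := by
      intro v
      rw [happ2]
      have h2 := (abs_le.mp (hbd v)).2
      calc (0:ℝ) ≤ (2 * M)⁻¹ * (M * Q v - P v) := mul_nonneg hinv.le (by linarith)
        _ = 2⁻¹ * Q v - (2 * M)⁻¹ * P v := by field_simp
    have hsum : Q = Q₁ + Q₂ := by
      rw [hQ₁, hQ₂]
      module
    obtain ⟨⟨c, hc0, hc⟩, -⟩ := hext Q₁ Q₂ h1L h1p h2L h2p hsum
    refine ⟨2 * M * (c - 2⁻¹), QuadraticMap.ext fun v => ?_⟩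
    have h1 := DFunLike.congr_fun hc v
    rw [happ, QuadraticMap.smul_apply, smul_eq_mul] at h1
    rw [QuadraticMap.smul_apply, smul_eq_mul]
    have h4 : (2 * M)⁻¹ * P v = c * Q v - 2⁻¹ * Q v := by linarith
    have h3 : P v = (2 * M) * ((2 * M)⁻¹ * P v) := by field_simp
    rw [h3, h4]; ring
  · intro hmax Q₁ Q₂ h1L h1p h2L h2p hsum
    have hsump : ∀ v, Q v = Q₁ v + Q₂ v := fun v => by
      rw [hsum, QuadraticMap.add_apply]
    have hker1 : qfKernel Q ⊆ qfKernel Q₁ := by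
      intro v hv
      have hq : Q v = 0 := apply_eq_zero_of_mem_qfKernel Q hv
      have h1 : Q₁ v = 0 := le_antisymm (by linarith [hsump v, h2p v]) (h1p v)
      exact mem_qfKernel_of_apply_eq_zero Q₁ h1p h1
    have hker2 : qfKernel Q ⊆ qfKernel Q₂ := by
      intro v hv
      have hq : Q v = 0 := apply_eq_zero_of_mem_qfKernel Q hv
      have h1 : Q₂ v = 0 := le_antisymm (by linarith [hsump v, h1p v]) (h2p v)
      exact mem_qfKernel_of_apply_eq_zero Q₂ h2p h1
    obtain ⟨l1, hl1⟩ := hmax Q₁ h1L hker1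
    obtain ⟨l2, hl2⟩ := hmax Q₂ h2L hker2
    exact ⟨nonneg_coeff Q Q₁ hQpsd h1p l1 hl1, nonneg_coeff Q Q₂ hQpsd h2p l2 hl2⟩
end
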